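/- Let P⁺ be a weighted set of probability measures on a finite state space S, and let E ⊆ S satisfy ᾱ(E) > 0. Then for any menu M, act h, and act f ∈ M, the maximum weighted expected regret of fEh with respect to the menu MEh = {gEh : g ∈ M} and P⁺ equals ᾱ(E) times the maximum weighted expected regret of f with respect to M and the updated weighted set P⁺|E. Consequently, for all f, g ∈ M, fEh ⪰_{MEh, P⁺} gEh if and only if f ⪰_{M, P⁺|E} g. -/

import Mathlib

open Finset

def IsProb {S : Type*} [Fintype S] (p : S → ℝ) : Prop :=
  (∀ s, 0 ≤ p s) ∧ ∑ s, p s = 1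

noncomputable def mass {S : Type*} [Fintype S] (p : S → ℝ) (E : Finset S) : ℝ :=
  ∑ s ∈ E, p s

noncomputable def condProb {S : Type*} [Fintype S] [DecidableEq S]
    (p : S → ℝ) (E : Finset S) : S → ℝ :=
  fun s => if s ∈ E then p s / mass p E else 0

/-- ᾱ(E) = sup over (Pr, α) ∈ P⁺ of α·Pr(E). -/
noncomputable def abar {S : Type*} [Fintype S]
    (P : Set ((S → ℝ) × ℝ)) (E : Finset S) : ℝ :=
  sSup {w | ∃ pa ∈ P, w = pa.2 * mass pa.1 E}

/-- Likelihood updating of a weighted set of probability measures on event `E`. -/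
noncomputable def lupdate {S : Type*} [Fintype S] [DecidableEq S]
    (P : Set ((S → ℝ) × ℝ)) (E : Finset S) : Set ((S → ℝ) × ℝ) :=
  {x | (∃ pa ∈ P, x.1 = condProb pa.1 E) ∧
       x.2 = sSup {w | ∃ qb ∈ P, condProb qb.1 E = x.1 ∧
                        w = qb.2 * mass qb.1 E / abar P E}}

/-- Best utility in state `s` among acts in the menu `M`. -/
noncomputable def best {S : Type*} [Fintype S] (M : Set (S → ℝ)) (s : S) : ℝ :=
  sSup ((fun g => g s) '' M)

/-- Maximum weighted expected regret of `f` w.r.t. menu `M` and weighted set `P`. -/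
noncomputable def wreg {S : Type*} [Fintype S]
    (P : Set ((S → ℝ) × ℝ)) (M : Set (S → ℝ)) (f : S → ℝ) : ℝ :=
  sSup {r | ∃ pa ∈ P, r = pa.2 * ∑ s, pa.1 s * (best M s - f s)}

/-- The act `fEh`, equal to `f` on `E` and to `h` off `E`. -/
def splice {S : Type*} [DecidableEq S] (f h : S → ℝ) (E : Finset S) : S → ℝ :=
  fun s => if s ∈ E then f s else h s


/-!
Off `E` the act `fEh` agrees with every act of the menu `MEh`, so its regret vanishes there,
and the regret of `fEh` with respect to `P⁺` is `sup α · Σ_{s ∈ E} Pr(s) r(s)`, where `r` is the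
regret of `f` in `M`. Each term equals `α · Pr(E) · E_{Pr|E}[r]`. Grouping the pairs `(Pr, α)`
by their conditional `Pr|E`, the supremum of `α · Pr(E)` over a group is `ᾱ(E)` times the
updated weight of `Pr|E`, so the whole supremum is `ᾱ(E) · regret_{M,P⁺|E}(f)`. The preference
statement follows because `ᾱ(E) > 0`.
-/

theorem Real.sSup_image_mul_eq_sSup_fiberwise {ι κ : Type*} (P : Set ι) (φ : ι → κ)
    (w : ι → ℝ) (t : κ → ℝ) (hw : ∀ i ∈ P, 0 ≤ w i) (ht : ∀ i ∈ P, 0 ≤ t (φ i))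
    (hwb : BddAbove (w '' P)) (htb : BddAbove ((t ∘ φ) '' P)) :
    sSup ((fun i => w i * t (φ i)) '' P) =
      sSup ((fun k => sSup (w '' {j ∈ P | φ j = k}) * t k) '' (φ '' P)) := by
  set L := sSup ((fun i => w i * t (φ i)) '' P)
  have hL : 0 ≤ L := Real.sSup_nonneg <| by
    rintro _ ⟨i, hi, rfl⟩
    exact mul_nonneg (hw i hi) (ht i hi)
  have hLb : BddAbove ((fun i => w i * t (φ i)) '' P) := by
    obtain ⟨W, hW⟩ := hwb
    obtain ⟨T, hT⟩ := htb
    refine ⟨W * T, ?_⟩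
    rintro _ ⟨i, hi, rfl⟩
    have hwi : w i ≤ W := hW ⟨i, hi, rfl⟩
    exact mul_le_mul hwi (hT ⟨i, hi, rfl⟩) (ht i hi) ((hw i hi).trans hwi)
  have hfiber : ∀ i ∈ P, sSup (w '' {j ∈ P | φ j = φ i}) * t (φ i) ≤ L := by
    intro i hi
    rw [mul_comm, ← smul_eq_mul, ← Real.sSup_smul_of_nonneg (ht i hi)]
    refine Real.sSup_le ?_ hL
    rintro _ ⟨_, ⟨j, ⟨hj, hφ⟩, rfl⟩, rfl⟩
    change t (φ i) * w j ≤ L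
    rw [← hφ, mul_comm]
    exact le_csSup hLb ⟨j, hj, rfl⟩
  apply le_antisymm
  · refine Real.sSup_le ?_ (Real.sSup_nonneg ?_)
    · rintro _ ⟨i, hi, rfl⟩
      have hwi : w i ≤ sSup (w '' {j ∈ P | φ j = φ i}) :=
        le_csSup (hwb.mono (Set.image_mono (Set.sep_subset _ _))) ⟨i, ⟨hi, rfl⟩, rfl⟩
      refine (mul_le_mul_of_nonneg_right hwi (ht i hi)).trans
        (le_csSup ⟨L, ?_⟩ ⟨φ i, ⟨i, hi, rfl⟩, rfl⟩)
      rintro _ ⟨_, ⟨j, hj, rfl⟩, rfl⟩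
      exact hfiber j hj
    · rintro _ ⟨_, ⟨i, hi, rfl⟩, rfl⟩
      refine mul_nonneg (Real.sSup_nonneg ?_) (ht i hi)
      rintro _ ⟨j, ⟨hj, -⟩, rfl⟩
      exact hw j hj
  · refine Real.sSup_le ?_ hL
    rintro _ ⟨_, ⟨i, hi, rfl⟩, rfl⟩
    exact hfiber i hi

theorem Real.bddAbove_of_sSup_pos {s : Set ℝ} (h : 0 < sSup s) : BddAbove s := by
  by_contra hs
  rw [Real.sSup_of_not_bddAbove hs] at h
  exact lt_irrefl 0 h

section WeightedRegret

variable {S : Type*} [Fintype S]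

theorem wreg_eq_sSup_image (P : Set ((S → ℝ) × ℝ)) (M : Set (S → ℝ)) (f : S → ℝ) :
    wreg P M f = sSup ((fun pa => pa.2 * ∑ s, pa.1 s * (best M s - f s)) '' P) := by
  simp only [wreg, Set.image, eq_comm]

theorem abar_eq_sSup_image (P : Set ((S → ℝ) × ℝ)) (E : Finset S) :
    abar P E = sSup ((fun pa => pa.2 * mass pa.1 E) '' P) := by
  simp only [abar, Set.image, eq_comm]

variable [DecidableEq S]

theorem lupdate_eq_image (P : Set ((S → ℝ) × ℝ)) (E : Finset S) :
    lupdate P E = (fun q => (q, sSup ((fun pa => pa.2 * mass pa.1 E / abar P E) ''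
      {pa ∈ P | condProb pa.1 E = q}))) '' ((fun pa => condProb pa.1 E) '' P) := by
  have hfiber : ∀ q, {w | ∃ qb ∈ P, condProb qb.1 E = q ∧ w = qb.2 * mass qb.1 E / abar P E} =
      (fun pa => pa.2 * mass pa.1 E / abar P E) '' {pa ∈ P | condProb pa.1 E = q} := by
    intro q
    ext w
    simp only [Set.mem_ofPred_eq, Set.mem_image, and_assoc, eq_comm]
  ext ⟨q, β⟩
  simp only [lupdate, hfiber, Set.mem_ofPred_eq, Set.mem_image, Prod.mk.injEq]
  constructor
  · rintro ⟨⟨pa, hpa, rfl⟩, rfl⟩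
    exact ⟨_, ⟨pa, hpa, rfl⟩, rfl, rfl⟩
  · rintro ⟨_, ⟨pa, hpa, rfl⟩, rfl, rfl⟩
    exact ⟨⟨pa, hpa, rfl⟩, rfl⟩

theorem condProb_nonneg {p : S → ℝ} {E : Finset S} (hp : ∀ s ∈ E, 0 ≤ p s) (s : S) :
    0 ≤ condProb p E s := by
  unfold condProb
  split_ifs with hs
  · exact div_nonneg (hp s hs) (Finset.sum_nonneg hp)
  · exact le_rfl

theorem condProb_le_one {p : S → ℝ} {E : Finset S} (hp : ∀ s ∈ E, 0 ≤ p s) (s : S) :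
    condProb p E s ≤ 1 := by
  unfold condProb
  split_ifs with hs
  · exact div_le_one_of_le₀ (Finset.single_le_sum hp hs) (Finset.sum_nonneg hp)
  · exact zero_le_one

theorem mass_mul_sum_condProb_mul {p : S → ℝ} {E : Finset S} (hp : ∀ s ∈ E, 0 ≤ p s)
    (x : S → ℝ) : mass p E * ∑ s, condProb p E s * x s = ∑ s ∈ E, p s * x s := by
  simp only [condProb, ite_mul, zero_mul, Finset.sum_ite_mem, Finset.univ_inter]
  by_cases hm : mass p E = 0
  · have hp0 : ∀ s ∈ E, p s = 0 := (Finset.sum_eq_zero_iff_of_nonneg hp).1 hm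
    rw [hm, zero_mul, Finset.sum_eq_zero fun s hs => by rw [hp0 s hs, zero_mul]]
  · rw [Finset.mul_sum]
    refine Finset.sum_congr rfl fun s _ => ?_
    field_simp

theorem best_image_splice {M : Set (S → ℝ)} (hM : M.Nonempty) (h : S → ℝ) (E : Finset S)
    (s : S) : best ((fun g => splice g h E) '' M) s = if s ∈ E then best M s else h s := by
  unfold best
  rw [Set.image_image]
  split_ifs with hs
  · simp only [splice, hs, if_true]
  · simp only [splice, hs, if_false, hM.image_const, csSup_singleton]

theorem sum_mul_regret_splice {M : Set (S → ℝ)} (hM : M.Nonempty) (p f h : S → ℝ)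
    (E : Finset S) :
    ∑ s, p s * (best ((fun g => splice g h E) '' M) s - splice f h E s) =
      ∑ s ∈ E, p s * (best M s - f s) := by
  rw [← Finset.sum_subset (Finset.subset_univ E) fun s _ hs => by
    simp [best_image_splice hM, splice, hs]]
  exact Finset.sum_congr rfl fun s hs => by simp [best_image_splice hM, splice, hs]

theorem wreg_image_splice_eq_abar_mul_wreg_lupdate {P : Set ((S → ℝ) × ℝ)} {E : Finset S}
    {M : Set (S → ℝ)} {f : S → ℝ} (hp : ∀ pa ∈ P, ∀ s ∈ E, 0 ≤ pa.1 s)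
    (hα : ∀ pa ∈ P, 0 ≤ pa.2) (hE : 0 < abar P E)
    (hbdd : ∀ s, BddAbove ((fun g => g s) '' M)) (hf : f ∈ M) (h : S → ℝ) :
    wreg P ((fun g => splice g h E) '' M) (splice f h E) =
      abar P E * wreg (lupdate P E) M f := by
  have hregret : ∀ s, 0 ≤ best M s - f s :=
    fun s => sub_nonneg.2 (le_csSup (hbdd s) ⟨f, hf, rfl⟩)
  set w := fun pa : (S → ℝ) × ℝ => pa.2 * mass pa.1 E / abar P E
  set t := fun q : S → ℝ => ∑ s, q s * (best M s - f s)
  have hw : ∀ pa ∈ P, 0 ≤ w pa := fun pa hpa =>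
    div_nonneg (mul_nonneg (hα pa hpa) (Finset.sum_nonneg (hp pa hpa))) hE.le
  have ht : ∀ pa ∈ P, 0 ≤ t (condProb pa.1 E) := fun pa hpa =>
    Finset.sum_nonneg fun s _ => mul_nonneg (condProb_nonneg (hp pa hpa) s) (hregret s)
  have hwb : BddAbove (w '' P) := by
    rw [← Set.image_image (· / abar P E) (fun pa : (S → ℝ) × ℝ => pa.2 * mass pa.1 E)]
    exact (show Monotone (· / abar P E) from
      fun _ _ hxy => div_le_div_of_nonneg_right hxy hE.le).map_bddAbove
      (Real.bddAbove_of_sSup_pos (abar_eq_sSup_image P E ▸ hE))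
  have htb : BddAbove ((t ∘ fun pa => condProb pa.1 E) '' P) := by
    refine ⟨∑ s, (best M s - f s), ?_⟩
    rintro _ ⟨pa, hpa, rfl⟩
    exact Finset.sum_le_sum fun s _ =>
      mul_le_of_le_one_left (hregret s) (condProb_le_one (hp pa hpa) s)
  have hsplice : ∀ pa ∈ P,
      pa.2 * ∑ s, pa.1 s * (best ((fun g => splice g h E) '' M) s - splice f h E s) =
        abar P E • (w pa * t (condProb pa.1 E)) := by
    intro pa hpa
    rw [sum_mul_regret_splice ⟨f, hf⟩, ← mass_mul_sum_condProb_mul (hp pa hpa), smul_eq_mul]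
    simp only [w, t]
    field_simp
  rw [wreg_eq_sSup_image, Set.image_congr hsplice, ← Set.image_image (abar P E • ·),
    Set.image_smul, Real.sSup_smul_of_nonneg hE.le, smul_eq_mul,
    Real.sSup_image_mul_eq_sSup_fiberwise P _ w t hw ht hwb htb, wreg_eq_sSup_image,
    lupdate_eq_image]
  simp only [Set.image_image]
  rfl

end WeightedRegret

/-- `regret_{MEh,P⁺}(fEh) = ᾱ(E) · regret_{M,P⁺|E}(f)`, and consequently
`fEh ⪰_{MEh,P⁺} gEh` iff `f ⪰_{M,P⁺|E} g`. -/
theorem wreg_splice_eq_abar_mul_wreg_update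
    {S : Type*} [Fintype S] [DecidableEq S]
    (P : Set ((S → ℝ) × ℝ))
    (hP : ∀ pa ∈ P, IsProb pa.1 ∧ pa.2 ∈ Set.Icc (0:ℝ) 1)
    (E : Finset S) (hE : 0 < abar P E)
    (M : Set (S → ℝ)) (hbdd : ∀ s, BddAbove ((fun g => g s) '' M))
    (h : S → ℝ) :
    (∀ f ∈ M,
      wreg P ((fun g => splice g h E) '' M) (splice f h E) =
        abar P E * wreg (lupdate P E) M f) ∧
    (∀ f ∈ M, ∀ g ∈ M,
      (wreg P ((fun g' => splice g' h E) '' M) (splice f h E) ≤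
         wreg P ((fun g' => splice g' h E) '' M) (splice g h E) ↔
       wreg (lupdate P E) M f ≤ wreg (lupdate P E) M g)) := by
  have key : ∀ f ∈ M, wreg P ((fun g => splice g h E) '' M) (splice f h E) =
      abar P E * wreg (lupdate P E) M f := fun f hf =>
    wreg_image_splice_eq_abar_mul_wreg_lupdate (fun pa hpa s _ => (hP pa hpa).1.1 s)
      (fun pa hpa => (hP pa hpa).2.1) hE hbdd hf h
  refine ⟨key, fun f hf g hg => ?_⟩
  rw [key f hf, key g hg]
  exact mul_le_mul_iff_right₀ hE
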